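/- For f in the Schwartz space 𝒮(𝒬), the partial Fourier transform of the Radon transform of f satisfies ℱ₂(ℛf)(x,a) = ℱf(−2xa, a) for all x ∈ ℍ and a ∈ Im ℍ, where −2xa is the quaternion product of −2x and a. -/

import Mathlib

noncomputable section

open MeasureTheory Quaternion Complex RealInnerProductSpace

/- Measure-theoretic instances for the quaternions. -/
noncomputable instance : MeasurableSpace ℍ[ℝ] := borel _
instance : BorelSpace ℍ[ℝ] := ⟨rfl⟩

/-- The purely imaginary quaternions `Im ℍ ≅ ℝ³`. -/
def ImH : Submodule ℝ ℍ[ℝ] where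
  carrier := {q | q.re = 0}
  add_mem' := by intro a b ha hb; simp_all [Set.mem_setOf_eq]
  zero_mem' := by simp
  smul_mem' := by intro c q hq; simp_all [Set.mem_setOf_eq]

noncomputable instance : MeasurableSpace ↥ImH := borel _
instance : BorelSpace ↥ImH := ⟨rfl⟩

/-- the imaginary part of a quaternion, as an element of `Im ℍ`. -/
def imPart (q : ℍ[ℝ]) : ↥ImH := ⟨q.im, by show q.im.re = 0; simp⟩

/-- The quaternion Heisenberg group `𝒬 = ℍ × Im ℍ` (as a set/measure space). -/
abbrev QH := ℍ[ℝ] × ↥ImH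

/-- Group law of `𝒬` : `(x,t)(x′,t′) = (x + x′, t + t′ − 2 Im( x̄′ x ))`. -/
def Qmul (p q : QH) : QH :=
  (p.1 + q.1, p.2 + q.2 - (2 : ℝ) • imPart (star q.1 * p.1))

/-- Inverse in `𝒬`. -/
def Qinv (p : QH) : QH := (-p.1, -p.2)

lemma sandwich_re (v t : ℍ[ℝ]) (ht : t.re = 0) : (v * t * star v).re = 0 := by
  simp [Quaternion.re_mul, Quaternion.imI_mul, Quaternion.imJ_mul, Quaternion.imK_mul,
    Quaternion.re_star, Quaternion.imI_star, Quaternion.imJ_star, Quaternion.imK_star, ht]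
  ring

/-- `t ↦ v t v̄` as a map of `Im ℍ`. -/
def sandwich (v : ℍ[ℝ]) (t : ↥ImH) : ↥ImH := ⟨v * (t : ℍ[ℝ]) * star v, sandwich_re v t t.2⟩

/-- `Sp(1)`, the unit quaternions. -/
abbrev Sp1 : Type := Metric.sphere (0 : ℍ[ℝ]) 1

lemma Sp1.norm_eq (u : Sp1) : ‖(u : ℍ[ℝ])‖ = 1 := mem_sphere_zero_iff_norm.mp u.2

def sp1Mul (u v : Sp1) : Sp1 :=
  ⟨(u : ℍ[ℝ]) * (v : ℍ[ℝ]), by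
    simp [mem_sphere_zero_iff_norm, norm_mul, Sp1.norm_eq u, Sp1.norm_eq v]⟩

def sp1One : Sp1 := ⟨1, by simp [mem_sphere_zero_iff_norm]⟩

/-- The (two-fold cover of the) affine automorphism group `𝐏` of `𝒬`. -/
abbrev P := ℍ[ℝ] × ↥ImH × {r : ℝ // 0 < r} × Sp1 × Sp1

/-- Group law of `𝐏`. -/
def Pmul (g h : P) : P :=
  ⟨g.1 + Real.sqrt (g.2.2.1 : ℝ) • ((g.2.2.2.1 : ℍ[ℝ]) * h.1 * star (g.2.2.2.2 : ℍ[ℝ])),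
   g.2.1 + (g.2.2.1 : ℝ) • sandwich (g.2.2.2.2 : ℍ[ℝ]) h.2.1
     - (2 * Real.sqrt (g.2.2.1 : ℝ)) •
        imPart ((g.2.2.2.2 : ℍ[ℝ]) * star h.1 * star (g.2.2.2.1 : ℍ[ℝ]) * g.1),
   ⟨(g.2.2.1 : ℝ) * (h.2.2.1 : ℝ), mul_pos g.2.2.1.2 h.2.2.1.2⟩,
   sp1Mul g.2.2.2.1 h.2.2.2.1, sp1Mul g.2.2.2.2 h.2.2.2.2⟩

/-- The identity of `𝐏`. -/
def Pone : P := ⟨0, 0, ⟨1, one_pos⟩, sp1One, sp1One⟩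

/-- The action of `𝐏` on `𝒬`. -/
def Pact (g : P) (p : QH) : QH :=
  ⟨g.1 + Real.sqrt (g.2.2.1 : ℝ) • ((g.2.2.2.1 : ℍ[ℝ]) * p.1 * star (g.2.2.2.2 : ℍ[ℝ])),
   g.2.1 + (g.2.2.1 : ℝ) • sandwich (g.2.2.2.2 : ℍ[ℝ]) p.2
     - (2 * Real.sqrt (g.2.2.1 : ℝ)) •
        imPart ((g.2.2.2.2 : ℍ[ℝ]) * star p.1 * star (g.2.2.2.1 : ℍ[ℝ]) * g.1)⟩

/-- The unitary representation `U` of `𝐏` on `L²(𝒬)`. -/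
def Uop (g : P) (f : QH → ℂ) : QH → ℂ := fun z =>
  (((g.2.2.1 : ℝ) ^ (-(5 : ℝ)/2) : ℝ) : ℂ) *
    f ((Real.sqrt (g.2.2.1 : ℝ))⁻¹ •
          (star (g.2.2.2.1 : ℍ[ℝ]) * (z.1 - g.1) * (g.2.2.2.2 : ℍ[ℝ])),
       ((g.2.2.1 : ℝ))⁻¹ •
          sandwich (star (g.2.2.2.2 : ℍ[ℝ]))
            (z.2 - g.2.1 + (2 : ℝ) • imPart (star z.1 * g.1)))

/-- The continuous wavelet transform `W_φ f (g) = ⟨f, U(g)φ⟩_{L²(𝒬)}`. -/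
def Wav (φ f : QH → ℂ) (g : P) : ℂ :=
  ∫ z : QH, f z * (starRingEnd ℂ) (Uop g φ z)

/-- Group convolution on `𝒬`. -/
def Qconv (f g : QH → ℂ) : QH → ℂ := fun z =>
  ∫ w : QH, f w * g (Qmul (Qinv w) z)

/-- dilation `φ_ρ(x,t) = ρ^{−5} φ(x/√ρ, t/ρ)`. -/
def dilateF (ρ : ℝ) (φ : QH → ℂ) : QH → ℂ := fun z =>
  ((ρ ^ (-5 : ℤ) : ℝ) : ℂ) * φ ((Real.sqrt ρ)⁻¹ • z.1, ρ⁻¹ • z.2)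

/-- rotation `φ_{u,v}(x,t) = φ(ū x v, v̄ t v)`. -/
def rotF (u v : Sp1) (φ : QH → ℂ) : QH → ℂ := fun z =>
  φ (star (u : ℍ[ℝ]) * z.1 * (v : ℍ[ℝ]), sandwich (star (v : ℍ[ℝ])) z.2)

/-- `φ̃(x,t) = conj (φ(−x,−t))`. -/
def tildeF (φ : QH → ℂ) : QH → ℂ := fun z => (starRingEnd ℂ) (φ (-z.1, -z.2))

/-- The Radon transform `ℛf(x,t) = ∫_ℍ f(y, t − 2 Im(ȳ x)) dy`. -/
def Radon (f : QH → ℂ) : QH → ℂ := fun z =>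
  ∫ y : ℍ[ℝ], f (y, z.2 - (2 : ℝ) • imPart (star y * z.1))

/-- Partial Fourier transform in the central variable. -/
def F2 (f : QH → ℂ) : QH → ℂ := fun p =>
  ∫ t : ↥ImH, f (p.1, t) * Complex.exp (Complex.I * ((⟪t, p.2⟫ : ℝ) : ℂ))

/-- Full (Euclidean) Fourier transform on `𝒬 ≅ ℝ⁴ × ℝ³`. -/
def FF (f : QH → ℂ) : QH → ℂ := fun p =>
  ∫ z : QH, f z * Complex.exp (Complex.I * ((⟪z.1, p.1⟫ : ℝ) : ℂ)) *
    Complex.exp (Complex.I * ((⟪z.2, p.2⟫ : ℝ) : ℂ))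

/-- Inverse of the partial Fourier transform `ℱ₂`. -/
def F2inv (f : QH → ℂ) : QH → ℂ := fun z =>
  (((2 * Real.pi) ^ (-3 : ℤ) : ℝ) : ℂ) *
    ∫ a : ↥ImH, f (z.1, a) * Complex.exp (-Complex.I * ((⟪z.2, a⟫ : ℝ) : ℂ))

/-- Inverse of the full Fourier transform `ℱ`. -/
def FFinv (f : QH → ℂ) : QH → ℂ := fun z =>
  (((2 * Real.pi) ^ (-7 : ℤ) : ℝ) : ℂ) *
    ∫ p : QH, f p * Complex.exp (-Complex.I * ((⟪z.1, p.1⟫ : ℝ) : ℂ)) *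
      Complex.exp (-Complex.I * ((⟪z.2, p.2⟫ : ℝ) : ℂ))

/-- The mixing map `Ψ(f)(x,t) = f(−2 x t, t)`. -/
def Psi (f : QH → ℂ) : QH → ℂ := fun z =>
  f ((-2 : ℝ) • (z.1 * (z.2 : ℍ[ℝ])), z.2)

open Classical in
/-- The inverse mixing map. -/
def PsiInv (f : QH → ℂ) : QH → ℂ := fun z =>
  if z.2 = 0 then 0 else
    f ((2 * ‖(z.2 : ℍ[ℝ])‖ ^ 2)⁻¹ • (z.1 * (z.2 : ℍ[ℝ])), z.2)

/-- A function is a Schwartz function. -/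
def IsSchwartz (f : QH → ℂ) : Prop := ∃ g : SchwartzMap QH ℂ, ⇑g = f

/-- The Semyanistyi–Lizorkin space `𝒮^*(𝒬)`: Schwartz functions all of whose
derivatives in the central variable vanish at `t = 0`. -/
def SstarUpper : Set (QH → ℂ) :=
  {f | IsSchwartz f ∧
    ∀ (x : ℍ[ℝ]) (n : ℕ), iteratedFDeriv ℝ n (fun t : ↥ImH => f (x, t)) 0 = 0}

/-- The Semyanistyi–Lizorkin space `𝒮_*(𝒬)`: Schwartz functions all of whose
moments in the central variable vanish. -/
def SstarLower : Set (QH → ℂ) :=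
  {f | IsSchwartz f ∧
    ∀ (x : ℍ[ℝ]) (s : ℕ × ℕ × ℕ),
      ∫ t : ↥ImH, f (x, t) *
        ((((t : ℍ[ℝ]).imI ^ s.1 * (t : ℍ[ℝ]).imJ ^ s.2.1 * (t : ℍ[ℝ]).imK ^ s.2.2 : ℝ)) : ℂ) = 0}

/-- basis vectors of `Im ℍ` -/
def eI : ↥ImH := ⟨⟨0,1,0,0⟩, rfl⟩
def eJ : ↥ImH := ⟨⟨0,0,1,0⟩, rfl⟩
def eK : ↥ImH := ⟨⟨0,0,0,1⟩, rfl⟩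

/-- partial derivative in the central variable along `v ∈ Im ℍ`. -/
def Dt (v : ↥ImH) (f : QH → ℂ) : QH → ℂ := fun z => fderiv ℝ f z (0, v)

/-- `𝓛 = −(1/π²)(∂²/∂t₁² + ∂²/∂t₂² + ∂²/∂t₃²)` acting in the central variable. -/
def Lop (f : QH → ℂ) : QH → ℂ := fun z =>
  -(((Real.pi ^ 2)⁻¹ : ℝ) : ℂ) * (Dt eI (Dt eI f) z + Dt eJ (Dt eJ f) z + Dt eK (Dt eK f) z)


/-! Fubini turns `ℱ₂(ℛf)(x,a)` into the integral over `𝒬` of `f(y, t - c y) e^{i⟨t,a⟩}` with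
`c y = 2 Im(ȳx)`. The shear `(y,t) ↦ (y, t - c y)` preserves Lebesgue measure; undoing it turns
the phase into `e^{i⟨t,a⟩} e^{i⟨c y, a⟩}`, and `⟨2 Im(ȳx), a⟩ = ⟨y, -2xa⟩` because `a` is purely
imaginary, which is the integrand of `ℱf(-2xa, a)`. -/

section Shear

variable {α G : Type*} [MeasurableSpace α] [MeasurableSpace G] [AddGroup G]
  [MeasurableAdd₂ G] [MeasurableSub₂ G]

def MeasurableEquiv.shearSub {c : α → G} (hc : Measurable c) : α × G ≃ᵐ α × G where
  toFun z := (z.1, z.2 - c z.1)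
  invFun z := (z.1, z.2 + c z.1)
  left_inv z := by simp
  right_inv z := by simp
  measurable_toFun := measurable_fst.prodMk (measurable_snd.sub (hc.comp measurable_fst))
  measurable_invFun := measurable_fst.prodMk (measurable_snd.add (hc.comp measurable_fst))

theorem measurePreserving_shearSub {μ : Measure α} {ν : Measure G} [SFinite μ] [SFinite ν]
    [ν.IsAddRightInvariant] {c : α → G} (hc : Measurable c) :
    MeasurePreserving (MeasurableEquiv.shearSub hc) (μ.prod ν) (μ.prod ν) :=
  (MeasurePreserving.id μ).skew_product (g := fun y t => t - c y)
    (MeasurableEquiv.shearSub hc).measurable_toFun.snd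
    (.of_forall fun y => by simpa [sub_eq_add_neg] using map_add_right_eq_self ν (-c y))

end Shear

instance : (volume : Measure QH).IsAddHaarMeasure :=
  Measure.prod.instIsAddHaarMeasure volume volume

@[fun_prop]
theorem continuous_imPart : Continuous imPart :=
  continuous_im.subtype_mk _

theorem inner_two_smul_imPart_star_mul (x y : ℍ[ℝ]) (a : ↥ImH) :
    ⟪(2 : ℝ) • imPart (star y * x), a⟫ = ⟪y, (-2 : ℝ) • (x * (a : ℍ[ℝ]))⟫ := by
  have ha : (a : ℍ[ℝ]).re = 0 := a.2
  change ⟪(2 : ℝ) • (star y * x).im, (a : ℍ[ℝ])⟫ = _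
  simp only [inner_def, re_smul, re_mul, imI_smul, imJ_smul, imK_smul, smul_eq_mul, re_star,
    imI_star, imJ_star, imK_star, imI_mul, imJ_mul, imK_mul, re_im, imI_im, imJ_im, imK_im, ha]
  ring

/-- For `f ∈ 𝒮(𝒬)`, `ℱ₂(ℛf)(x,a) = ℱf(−2xa, a)`. -/
theorem statement6 (f : SchwartzMap QH ℂ) (x : ℍ[ℝ]) (a : ↥ImH) :
    F2 (Radon ⇑f) (x, a) = FF ⇑f ((-2 : ℝ) • (x * (a : ℍ[ℝ])), a) := by
  set c : ℍ[ℝ] → ↥ImH := fun y => (2 : ℝ) • imPart (star y * x)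
  have hc : Continuous c := by fun_prop
  set e : ↥ImH → ℂ := fun t => exp (I * (⟪t, a⟫ : ℝ))
  set F : QH → ℂ := fun z => f z * e (z.2 + c z.1)
  have hF : Integrable F :=
    f.integrable.mul_bdd (by fun_prop) (.of_forall fun z => (norm_exp_I_mul_ofReal _).le)
  have hshear := measurePreserving_shearSub (μ := volume) (ν := volume) hc.measurable
  calc F2 (Radon ⇑f) (x, a) = ∫ t : ↥ImH, ∫ y : ℍ[ℝ], F (y, t - c y) := by
        simp only [F2, Radon, F, sub_add_cancel, ← integral_mul_const]
        rfl
    _ = ∫ z : QH, F (z.1, z.2 - c z.1) :=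
        (integral_prod_symm _ ((hshear.integrable_comp_emb
          (MeasurableEquiv.measurableEmbedding _)).2 hF)).symm
    _ = ∫ z : QH, F z := hshear.integral_comp' F
    _ = FF ⇑f ((-2 : ℝ) • (x * (a : ℍ[ℝ])), a) := by
        refine integral_congr_ae (.of_forall fun z => ?_)
        simp only [F, e, c, inner_add_left, inner_two_smul_imPart_star_mul, ofReal_add, mul_add,
          exp_add]
        ring

end
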